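/- arXiv:2207.11915 — 7 statements merged into one kernel-verified Lean document; each statement's English description precedes it below -/
import Mathlib

section
/- Let n ≥ 2 be an integer. Then for every k ∈ {0, 1, …, n−2} one has m_n(k) ≥ m_{n−1}(k) ≥ m_n(k) − 2. -/
/-- `mfun n k` is the function `m_n(k)` defined recursively by `m_n(0) = n` and
`m_n(k+1) = ⌈m_n(k)/8⌉ + n − (k+1)`, where `⌈a/8⌉ = (a+7)/8` for naturals. -/
def mfun (n : ℕ) : ℕ → ℕ
  | 0 => n
  | k + 1 => (mfun n k + 7) / 8 + (n - (k + 1))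

/-- Let `n ≥ 2` be an integer. Then for every `k ∈ {0, 1, …, n−2}` one has
`m_n(k) ≥ m_{n−1}(k) ≥ m_n(k) − 2`. -/
theorem stmt_0 (n : ℕ) (hn : 2 ≤ n) (k : ℕ) (hk : k ≤ n - 2) :
    mfun n k ≥ mfun (n - 1) k ∧ (mfun (n - 1) k : ℤ) ≥ (mfun n k : ℤ) - 2 := by
  induction k with
  | zero => simp [mfun]; omega
  | succ k ih =>
    obtain ⟨h1, h2⟩ := ih (by omega)
    simp only [mfun]
    push_cast
    omega
end

section
/- For every integer n ≥ 2, one has m_n(n−1) = 2 (and consequently ⌈log₂ m_n(n−1)⌉ = 1, so that 3n − 2 + ⌈log₂ m_n(n−1)⌉ = 3n − 1). -/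
theorem mfun_pos {n : ℕ} (hn : 0 < n) : ∀ k, 0 < mfun n k
  | 0 => hn
  | k + 1 => by
    have := mfun_pos hn k
    simp only [mfun]
    omega

theorem mfun_le_two_mul_sub {n : ℕ} : ∀ k, k < n → mfun n k ≤ 2 * (n - k)
  | 0, _ => by simp only [mfun]; omega
  | k + 1, hk => by
    have := mfun_le_two_mul_sub (n := n) k (by omega)
    simp only [mfun]
    omega

theorem mfun_sub_one {n : ℕ} (hn : 2 ≤ n) : mfun n (n - 1) = 2 := by
  obtain ⟨k, rfl⟩ : ∃ k, n = k + 2 := ⟨n - 2, by omega⟩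
  have hpos := mfun_pos (n := k + 2) (by omega) k
  have hle := mfun_le_two_mul_sub k (by omega : k < k + 2)
  change (mfun (k + 2) k + 7) / 8 + (k + 2 - (k + 1)) = 2
  omega

/-- For every integer `n ≥ 2`, one has `m_n(n−1) = 2` (and consequently
`⌈log₂ m_n(n−1)⌉ = 1`, so that `3n − 2 + ⌈log₂ m_n(n−1)⌉ = 3n − 1`). -/
theorem stmt_1 (n : ℕ) (hn : 2 ≤ n) :
    mfun n (n - 1) = 2 ∧ Nat.clog 2 (mfun n (n - 1)) = 1 ∧
      3 * n - 2 + Nat.clog 2 (mfun n (n - 1)) = 3 * n - 1 := by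
  have hclog : Nat.clog 2 2 = 1 := Nat.clog_eq_one le_rfl le_rfl
  rw [mfun_sub_one hn, hclog]
  omega
end

section
/- Let s ≥ 3 be an integer and let r be the unique integer in {−2,−1,0,1,2} with s ≡ r (mod 5). Then 31 divides 2^{s−r} − 1 and P(2^s) = 5·2^s + 2^{2+r} · (2^{s−r} − 1)/31. -/
/-- `Pfun m = 5m + ∑_{i=0}^{∞} ⌊m/(8·32^i)⌋`; the sum is finite because every
term with `8·32^i > m` equals `0`. This is the width `P_𝒥(K,J)` of the Q-effective
implementation of the Jacobi algorithm on a `K×J` grid, with `m = KJ`. -/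
noncomputable def Pfun (m : ℕ) : ℕ := 5 * m + ∑' i : ℕ, m / (8 * 32 ^ i)

/-- Let `s ≥ 3` and let `r` be the unique integer in `{−2,−1,0,1,2}` with
`s ≡ r (mod 5)`. Then `31 ∣ 2^{s−r} − 1` and
`P(2^s) = 5·2^s + 2^{2+r} · (2^{s−r} − 1)/31`. -/
theorem stmt_10 (s : ℕ) (hs : 3 ≤ s) (r : ℤ) (hr1 : -2 ≤ r) (hr2 : r ≤ 2)
    (hmod : (s : ℤ) ≡ r [ZMOD 5]) :
    (31 : ℤ) ∣ 2 ^ ((s : ℤ) - r).toNat - 1 ∧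
      (Pfun (2 ^ s) : ℤ) =
        5 * 2 ^ s + 2 ^ (2 + r).toNat * ((2 ^ ((s : ℤ) - r).toNat - 1) / 31) := by
  obtain ⟨k, hk⟩ : (5:ℤ) ∣ (s:ℤ) - r := hmod.symm.dvd
  have hk1 : 1 ≤ k := by omega
  set q : ℕ := k.toNat with hq
  set a : ℕ := (2 + r).toNat with ha
  have haZ : (a : ℤ) = 2 + r := Int.toNat_of_nonneg (by omega)
  have hqZ : (q : ℤ) = k := Int.toNat_of_nonneg (by omega)
  have hsr : ((s:ℤ) - r).toNat = 5 * q := by omega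
  have hsa : s + 2 = 5 * q + a := by omega
  have hq1 : 1 ≤ q := by omega
  -- compute the tsum
  have hpow : ∀ i : ℕ, 8 * 32 ^ i = 2 ^ (3 + 5 * i) := by
    intro i
    rw [show (8:ℕ) = 2 ^ 3 by norm_num, show (32:ℕ) = 2 ^ 5 by norm_num,
      ← pow_mul, ← pow_add]
  have hsum : ∑' i : ℕ, 2 ^ s / (8 * 32 ^ i)
      = ∑ i ∈ Finset.range q, 2 ^ (s - (3 + 5 * i)) := by
    rw [tsum_eq_sum (s := Finset.range q)]
    · apply Finset.sum_congr rfl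
      intro i hi
      rw [hpow i, Nat.pow_div (by simp at hi; omega) two_pos]
    · intro i hi
      simp only [Finset.mem_range, not_lt] at hi
      apply Nat.div_eq_of_lt
      rw [hpow i]
      exact Nat.pow_lt_pow_right one_lt_two (by omega)
  have hsum2 : ∑ i ∈ Finset.range q, 2 ^ (s - (3 + 5 * i))
      = 2 ^ a * ∑ j ∈ Finset.range q, 32 ^ j := by
    rw [Finset.mul_sum]
    rw [← Finset.sum_range_reflect (fun j => 2 ^ a * 32 ^ j) q]
    apply Finset.sum_congr rfl
    intro i hi
    simp only [Finset.mem_range] at hi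
    rw [show (32:ℕ) = 2 ^ 5 by norm_num, ← pow_mul, ← pow_add]
    congr 1
    omega
  set T : ℤ := ∑ j ∈ Finset.range q, (32:ℤ) ^ j with hT
  have hgeom : T * 31 = 32 ^ q - 1 := by
    have := geom_sum_mul (32:ℤ) q
    simpa using this
  have h2q : (2:ℤ) ^ (5 * q) = 32 ^ q := by
    rw [pow_mul]; norm_num
  have hdvd : (31:ℤ) ∣ 2 ^ ((s : ℤ) - r).toNat - 1 := by
    rw [hsr, h2q, ← hgeom]
    exact ⟨T, (mul_comm T 31)⟩
  refine ⟨hdvd, ?_⟩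
  have hdiv : (2 ^ ((s : ℤ) - r).toNat - 1) / 31 = T := by
    rw [hsr, h2q, ← hgeom, Int.mul_ediv_cancel _ (by norm_num)]
  rw [hdiv, Pfun, hsum, hsum2]
  push_cast
  ring
end

section
/- Let s ≥ 8 be an integer and let r be the unique integer in {−2,−1,0,1,2} with s ≡ r (mod 5). Then 41·2^{s−3} < P(2^s) < 21·2^{s−2} − 2^{2+r} ≤ 21·2^{s−2} − 1 < 6·2^s. -/
lemma geom_aux (k q : ℕ) :
    31 * (∑ i ∈ Finset.range (k+1), 2^(5*k+q-5*i)) + 2^q = 32 * 2^(5*k+q) := by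
  induction k with
  | zero => simp; ring
  | succ k ih =>
    rw [Finset.sum_range_succ']
    have h : ∀ i : ℕ, 5*(k+1)+q-5*(i+1) = 5*k+q-5*i := by intro i; omega
    simp only [h, Nat.mul_zero, Nat.sub_zero]
    have h2 : (2:ℕ)^(5*(k+1)+q) = 32 * 2^(5*k+q) := by
      rw [show 5*(k+1)+q = 5*k+q+5 by ring, pow_add]; ring
    rw [h2]
    linarith [ih]

/-- Let `s ≥ 8` and let `r` be the unique integer in `{−2,−1,0,1,2}` with
`s ≡ r (mod 5)`. Then
`41·2^{s−3} < P(2^s) < 21·2^{s−2} − 2^{2+r} ≤ 21·2^{s−2} − 1 < 6·2^s`. -/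
theorem stmt_13 (s : ℕ) (hs : 8 ≤ s) (r : ℤ) (hr1 : -2 ≤ r) (hr2 : r ≤ 2)
    (hmod : (s : ℤ) ≡ r [ZMOD 5]) :
    (41 * 2 ^ (s - 3) : ℤ) < Pfun (2 ^ s) ∧
    (Pfun (2 ^ s) : ℤ) < 21 * 2 ^ (s - 2) - 2 ^ (2 + r).toNat ∧
    (21 * 2 ^ (s - 2) - 2 ^ (2 + r).toNat : ℤ) ≤ 21 * 2 ^ (s - 2) - 1 ∧
    (21 * 2 ^ (s - 2) - 1 : ℤ) < 6 * 2 ^ s := by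
  set k := (s - 3) / 5 with hk
  set q := (s - 3) % 5 with hq
  have hskq : s = 3 + (5*k + q) := by omega
  have hq5 : q < 5 := Nat.mod_lt _ (by norm_num)
  -- q = (2 + r).toNat
  have hqr : q = (2 + r).toNat := by
    have hmod' : ((s:ℤ) - 3) % 5 = ((2 + r) % 5) := by
      have : ((s:ℤ) - 3) % 5 = (r - 3) % 5 := Int.ModEq.sub_right 3 hmod
      rw [this]
      omega
    have h1 : ((s:ℤ) - 3) % 5 = ((s - 3 : ℕ) : ℤ) % 5 := by
      congr 1; omega
    have h2 : ((s - 3 : ℕ) : ℤ) % 5 = ((s - 3) % 5 : ℕ) := by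
      push_cast; omega
    have h3 : (2 + r) % 5 = 2 + r := Int.emod_emod_of_dvd _ (dvd_refl 5) ▸ by omega
    omega
  -- compute the tsum
  have hterm : ∀ i : ℕ, (8 * 32 ^ i : ℕ) = 2 ^ (3 + 5*i) := by
    intro i
    rw [pow_add, show (32:ℕ) = 2^5 by norm_num, ← pow_mul]
    norm_num
  have hsum : ∑' i : ℕ, (2:ℕ)^s / (8 * 32 ^ i)
      = ∑ i ∈ Finset.range (k+1), 2^(5*k+q-5*i) := by
    rw [tsum_eq_sum (s := Finset.range (k+1))]
    · apply Finset.sum_congr rfl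
      intro i hi
      rw [Finset.mem_range] at hi
      rw [hterm i, Nat.pow_div (by omega) (by norm_num)]
      congr 1
      omega
    · intro i hi
      rw [Finset.mem_range, not_lt] at hi
      rw [hterm i]
      apply Nat.div_eq_of_lt
      exact Nat.pow_lt_pow_right (by norm_num) (by omega)
  have hkey := geom_aux k q
  -- pass to integers
  have hP : (Pfun (2^s) : ℤ)
      = 5 * 2^s + ((∑ i ∈ Finset.range (k+1), 2^(5*k+q-5*i) : ℕ) : ℤ) := by
    rw [Pfun, hsum]; push_cast; ring
  set S : ℤ := ((∑ i ∈ Finset.range (k+1), 2^(5*k+q-5*i) : ℕ) : ℤ) with hS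
  have hkeyZ : 31 * S + 2^q = 32 * 2^(5*k+q) := by
    rw [hS]; exact_mod_cast hkey
  have hA : ((2:ℤ))^(s-3) = 2^(5*k+q) := by congr 1; omega
  have hs2 : ((2:ℤ))^(s-2) = 2 * 2^(5*k+q) := by
    rw [show s - 2 = (5*k+q) + 1 by omega, pow_succ]; ring
  have hsfull : ((2:ℤ))^s = 8 * 2^(5*k+q) := by
    rw [hskq, pow_add]; norm_num
  have hQle : (2:ℤ)^q ≤ 16 := by
    calc (2:ℤ)^q ≤ 2^4 := pow_le_pow_right₀ (by norm_num) (by omega)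
    _ = 16 := by norm_num
  have hQpos : (1:ℤ) ≤ 2^q := one_le_pow₀ (by norm_num)
  have hAge : (32:ℤ) ≤ 2^(5*k+q) := by
    calc (32:ℤ) = 2^5 := by norm_num
    _ ≤ 2^(5*k+q) := pow_le_pow_right₀ (by norm_num) (by omega)
  rw [← hqr]
  refine ⟨?_, ?_, ?_, ?_⟩
  · rw [hP, hA]; linarith
  · rw [hP, hs2, hsfull]; linarith
  · rw [hs2]; linarith
  · rw [hs2, hsfull]; linarith
end

section
/- Let s ≥ 9 be an integer and let r be the unique integer in {−2,−1,0,1,2} with s ≡ r (mod 5). If r ∈ {−1,0,1,2}, then P(2^{s−1}) = 5·2^{s−1} + 2^{1+r} · (2^{s−r} − 1)/31. If r = −2, then P(2^{s−1}) = 5·2^{s−1} + 16 · (2^{s−3} − 1)/31. -/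
lemma h8 (i : ℕ) : (8 : ℕ) * 32 ^ i = 2 ^ (3 + 5 * i) := by
  rw [pow_add, pow_mul]; norm_num

lemma Gsum (b m : ℕ) (hb : b ≤ 4) :
    ∑' i : ℕ, 2 ^ (3 + b + 5 * m) / (8 * 32 ^ i) =
      ∑ j ∈ Finset.range (m + 1), 2 ^ (b + 5 * j) := by
  rw [tsum_eq_sum (s := Finset.range (m + 1))]
  · rw [← Finset.sum_range_reflect]
    apply Finset.sum_congr rfl
    intro i hi
    simp only [Finset.mem_range] at hi
    rw [h8, Nat.pow_div (by omega) (by norm_num)]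
    congr 1
    omega
  · intro i hi
    simp only [Finset.mem_range, not_lt] at hi
    apply Nat.div_eq_of_lt
    rw [h8]
    exact Nat.pow_lt_pow_right (by norm_num) (by omega)

lemma Hdiv (n : ℕ) : ((2:ℤ) ^ (5 * n) - 1) / 31 = ∑ j ∈ Finset.range n, 32 ^ j := by
  have h : (2:ℤ) ^ (5 * n) - 1 = 31 * ∑ j ∈ Finset.range n, 32 ^ j := by
    have := geom_sum_mul (32 : ℤ) n
    rw [pow_mul]
    norm_num at this ⊢
    linarith [this]
  rw [h, Int.mul_ediv_cancel_left _ (by norm_num)]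

lemma main_case (b m : ℕ) (hb : b ≤ 4) :
    (Pfun (2 ^ (3 + b + 5 * m)) : ℤ) =
      5 * 2 ^ (3 + b + 5 * m) + 2 ^ b * ((2 ^ (5 * (m + 1)) - 1) / 31) := by
  unfold Pfun
  rw [Gsum b m hb, Hdiv (m + 1)]
  push_cast
  rw [Finset.mul_sum]
  congr 1
  apply Finset.sum_congr rfl
  intro j _
  rw [pow_add, pow_mul]
  norm_num

/-- Let `s ≥ 9` and let `r` be the unique integer in `{−2,−1,0,1,2}` with
`s ≡ r (mod 5)`. If `r ∈ {−1,0,1,2}`, then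
`P(2^{s−1}) = 5·2^{s−1} + 2^{1+r} · (2^{s−r} − 1)/31`. If `r = −2`, then
`P(2^{s−1}) = 5·2^{s−1} + 16 · (2^{s−3} − 1)/31`. -/
theorem stmt_14 (s : ℕ) (hs : 9 ≤ s) (r : ℤ) (hr1 : -2 ≤ r) (hr2 : r ≤ 2)
    (hmod : (s : ℤ) ≡ r [ZMOD 5]) :
    (-1 ≤ r →
      (Pfun (2 ^ (s - 1)) : ℤ) =
        5 * 2 ^ (s - 1) + 2 ^ (1 + r).toNat * ((2 ^ ((s : ℤ) - r).toNat - 1) / 31)) ∧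
    (r = -2 →
      (Pfun (2 ^ (s - 1)) : ℤ) =
        5 * 2 ^ (s - 1) + 16 * (((2 : ℤ) ^ (s - 3) - 1) / 31)) := by
  have hm : (s : ℤ) % 5 = r % 5 := hmod
  interval_cases r
  · -- r = -2
    obtain ⟨q, hq⟩ : ∃ q, s = 5 * q + 3 := ⟨s / 5, by omega⟩
    refine ⟨fun h => absurd h (by norm_num), fun _ => ?_⟩
    have e1 : s - 1 = 3 + 4 + 5 * (q - 1) := by omega
    have e2 : s - 3 = 5 * ((q - 1) + 1) := by omega
    rw [e1, e2, show (16:ℤ) = 2 ^ 4 by norm_num]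
    exact main_case 4 (q - 1) (by norm_num)
  · -- r = -1
    obtain ⟨q, hq⟩ : ∃ q, s = 5 * q + 4 := ⟨s / 5, by omega⟩
    refine ⟨fun _ => ?_, fun h => absurd h (by norm_num)⟩
    have e1 : s - 1 = 3 + 0 + 5 * q := by omega
    have e2 : ((s : ℤ) - (-1)).toNat = 5 * (q + 1) := by omega
    rw [e1, e2]
    simpa using main_case 0 q (by norm_num)
  · -- r = 0
    obtain ⟨q, hq⟩ : ∃ q, s = 5 * q := ⟨s / 5, by omega⟩
    refine ⟨fun _ => ?_, fun h => absurd h (by norm_num)⟩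
    have e1 : s - 1 = 3 + 1 + 5 * (q - 1) := by omega
    have e2 : ((s : ℤ) - 0).toNat = 5 * ((q - 1) + 1) := by omega
    rw [e1, e2]
    simpa using main_case 1 (q - 1) (by norm_num)
  · -- r = 1
    obtain ⟨q, hq⟩ : ∃ q, s = 5 * q + 1 := ⟨s / 5, by omega⟩
    refine ⟨fun _ => ?_, fun h => absurd h (by norm_num)⟩
    have e1 : s - 1 = 3 + 2 + 5 * (q - 1) := by omega
    have e2 : ((s : ℤ) - 1).toNat = 5 * ((q - 1) + 1) := by omega
    rw [e1, e2]
    simpa using main_case 2 (q - 1) (by norm_num)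
  · -- r = 2
    obtain ⟨q, hq⟩ : ∃ q, s = 5 * q + 2 := ⟨s / 5, by omega⟩
    refine ⟨fun _ => ?_, fun h => absurd h (by norm_num)⟩
    have e1 : s - 1 = 3 + 3 + 5 * (q - 1) := by omega
    have e2 : ((s : ℤ) - 2).toNat = 5 * ((q - 1) + 1) := by omega
    rw [e1, e2]
    simpa using main_case 3 (q - 1) (by norm_num)
end

section
/- Let s ≥ 9 be an integer and let r be the unique integer in {−2,−1,0,1,2} with s ≡ r (mod 5). If r ∈ {−1,0,1,2}, then P(2^s) − P(2^{s−1}) = 5·2^{s−1} + 2^{1+r} · (2^{s−r} − 1)/31. If r = −2, then P(2^s) − P(2^{s−1}) = 5·2^{s−1} + 1 + 16 · (2^{s−3} − 1)/31. -/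
/-!
Since `8·32^i = 2^(5i+3)`, the sum in `P(2^n)` is the geometric sum `∑_{5i+3 ≤ n} 2^(n-3-5i)`,
which grows by `2^(n+2)` when `n` grows by `5`; hence
`31 · P(2^n) = 31·5·2^n + 2^(n+2) - 2^((n+2) % 5)`.
Subtracting this for `n = s - 1` from `n = s`, only the correction terms `2^((s+1) % 5)` and
`2^((s+2) % 5)` depend on the residue of `s` modulo 5, and they give the two cases.
-/

lemma eight_mul_thirtyTwo_pow (i : ℕ) : 8 * 32 ^ i = 2 ^ (5 * i + 3) := by
  rw [pow_add, pow_mul]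
  ring

lemma two_pow_div_eight_mul_thirtyTwo_pow_eq_zero {n i : ℕ} (h : n < 5 * i + 3) :
    2 ^ n / (8 * 32 ^ i) = 0 := by
  rw [eight_mul_thirtyTwo_pow]
  exact Nat.div_eq_of_lt (Nat.pow_lt_pow_right (by norm_num) h)

lemma summable_two_pow_div_eight_mul_thirtyTwo_pow (n : ℕ) :
    Summable fun i : ℕ => 2 ^ n / (8 * 32 ^ i) :=
  summable_of_ne_finset_zero (s := Finset.range n) fun i hi =>
    two_pow_div_eight_mul_thirtyTwo_pow_eq_zero (by simp only [Finset.mem_range] at hi; omega)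

lemma tsum_two_pow_div_eight_mul_thirtyTwo_pow_of_lt {n : ℕ} (h : n < 8) :
    ∑' i : ℕ, 2 ^ n / (8 * 32 ^ i) = 2 ^ n / 8 := by
  rw [tsum_eq_single 0 fun i hi => two_pow_div_eight_mul_thirtyTwo_pow_eq_zero (by omega)]
  simp

lemma tsum_two_pow_add_five_div_eight_mul_thirtyTwo_pow (n : ℕ) :
    ∑' i : ℕ, 2 ^ (n + 5) / (8 * 32 ^ i) =
      2 ^ (n + 2) + ∑' i : ℕ, 2 ^ n / (8 * 32 ^ i) := by
  have hshift (i : ℕ) : 2 ^ (n + 5) / (8 * 32 ^ (i + 1)) = 2 ^ n / (8 * 32 ^ i) := by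
    rw [show 2 ^ (n + 5) = 32 * 2 ^ n by ring, show 8 * 32 ^ (i + 1) = 32 * (8 * 32 ^ i) by ring,
      Nat.mul_div_mul_left _ _ (by norm_num)]
  rw [tsum_eq_zero_add' (by simpa only [hshift] using
    summable_two_pow_div_eight_mul_thirtyTwo_pow n), funext hshift,
    show 2 ^ (n + 5) = 2 ^ (n + 2) * (8 * 32 ^ 0) by ring,
    Nat.mul_div_cancel _ (by norm_num)]

theorem thirtyOne_mul_tsum_two_pow_div_eight_mul_thirtyTwo_pow_add :
    ∀ n : ℕ, 31 * ∑' i : ℕ, 2 ^ n / (8 * 32 ^ i) + 2 ^ ((n + 2) % 5) = 2 ^ (n + 2)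
  | n + 5 => by
    have ih := thirtyOne_mul_tsum_two_pow_div_eight_mul_thirtyTwo_pow_add n
    rw [tsum_two_pow_add_five_div_eight_mul_thirtyTwo_pow,
      show (n + 5 + 2) % 5 = (n + 2) % 5 by omega, show 2 ^ (n + 5 + 2) = 32 * 2 ^ (n + 2) by ring]
    omega
  | 0 | 1 | 2 | 3 | 4 => by
    rw [tsum_two_pow_div_eight_mul_thirtyTwo_pow_of_lt (by norm_num)]
    norm_num

lemma thirtyOne_mul_Pfun_two_pow_add (n : ℕ) :
    31 * Pfun (2 ^ n) + 2 ^ ((n + 2) % 5) = 31 * 5 * 2 ^ n + 2 ^ (n + 2) := by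
  have := thirtyOne_mul_tsum_two_pow_div_eight_mul_thirtyTwo_pow_add n
  rw [Pfun]
  omega

lemma thirtyOne_mul_Pfun_two_pow_succ_sub (t : ℕ) :
    31 * ((Pfun (2 ^ (t + 1)) : ℤ) - Pfun (2 ^ t)) =
      31 * 5 * 2 ^ t + 2 ^ (t + 2) + 2 ^ ((t + 2) % 5) - 2 ^ ((t + 3) % 5) := by
  have h₁ := thirtyOne_mul_Pfun_two_pow_add (t + 1)
  have h₀ := thirtyOne_mul_Pfun_two_pow_add t
  rw [show t + 1 + 2 = t + 3 by ring] at h₁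
  zify at h₀ h₁
  linear_combination h₁ - h₀

lemma thirtyOne_dvd_two_pow_sub_one {n : ℕ} (h : 5 ∣ n) : (31 : ℤ) ∣ 2 ^ n - 1 := by
  obtain ⟨k, rfl⟩ := h
  rw [pow_mul]
  exact sub_one_dvd_pow_sub_one ((2 : ℤ) ^ 5) k

theorem stmt_15_general (s : ℕ) (hs : 9 ≤ s) (r : ℤ) (hr2 : r ≤ 2)
    (hmod : (s : ℤ) ≡ r [ZMOD 5]) :
    (-1 ≤ r →
      (Pfun (2 ^ s) : ℤ) - Pfun (2 ^ (s - 1)) =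
        5 * 2 ^ (s - 1) + 2 ^ (1 + r).toNat * ((2 ^ ((s : ℤ) - r).toNat - 1) / 31)) ∧
    (r = -2 →
      (Pfun (2 ^ s) : ℤ) - Pfun (2 ^ (s - 1)) =
        5 * 2 ^ (s - 1) + 1 + 16 * (((2 : ℤ) ^ (s - 3) - 1) / 31)) := by
  obtain ⟨t, rfl⟩ : ∃ t, s = t + 1 := ⟨s - 1, by omega⟩
  have hmod' : ((t : ℤ) + 1) % 5 = r % 5 := by exact_mod_cast hmod
  have h31 := thirtyOne_mul_Pfun_two_pow_succ_sub t
  rw [Nat.add_sub_cancel]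
  refine ⟨fun hr => ?_, fun hr => ?_⟩
  · generalize hj : (1 + r).toNat = j
    generalize hn : ((↑(t + 1) : ℤ) - r).toNat = n
    rw [show (t + 2) % 5 = j by omega, show (t + 3) % 5 = j + 1 by omega,
      show t + 2 = j + n by omega] at h31
    have hq := Int.mul_ediv_cancel' (thirtyOne_dvd_two_pow_sub_one (n := n) (by omega))
    apply mul_left_cancel₀ (by norm_num : (31 : ℤ) ≠ 0)
    linear_combination h31 - 2 ^ j * hq
  · rw [show (t + 2) % 5 = 4 by omega, show (t + 3) % 5 = 0 by omega,
      show t + 2 = 4 + (t + 1 - 3) by omega] at h31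
    have hq := Int.mul_ediv_cancel' (thirtyOne_dvd_two_pow_sub_one (n := t + 1 - 3) (by omega))
    apply mul_left_cancel₀ (by norm_num : (31 : ℤ) ≠ 0)
    linear_combination h31 - 16 * hq

/-- Let `s ≥ 9` and let `r` be the unique integer in `{−2,−1,0,1,2}` with
`s ≡ r (mod 5)`. If `r ∈ {−1,0,1,2}`, then
`P(2^s) − P(2^{s−1}) = 5·2^{s−1} + 2^{1+r} · (2^{s−r} − 1)/31`. If `r = −2`, then
`P(2^s) − P(2^{s−1}) = 5·2^{s−1} + 1 + 16 · (2^{s−3} − 1)/31`. -/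
theorem stmt_15 (s : ℕ) (hs : 9 ≤ s) (r : ℤ) (hr1 : -2 ≤ r) (hr2 : r ≤ 2)
    (hmod : (s : ℤ) ≡ r [ZMOD 5]) :
    (-1 ≤ r →
      (Pfun (2 ^ s) : ℤ) - Pfun (2 ^ (s - 1)) =
        5 * 2 ^ (s - 1) + 2 ^ (1 + r).toNat * ((2 ^ ((s : ℤ) - r).toNat - 1) / 31)) ∧
    (r = -2 →
      (Pfun (2 ^ s) : ℤ) - Pfun (2 ^ (s - 1)) =
        5 * 2 ^ (s - 1) + 1 + 16 * (((2 : ℤ) ^ (s - 3) - 1) / 31)) :=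
  stmt_15_general s hs r hr2 hmod
end

section
/- Let s ≥ 9 be an integer and let r be the unique integer in {−2,−1,0,1,2} with s ≡ r (mod 5). If r ∈ {−1,0,1,2}, then 41·2^{s−4} < P(2^s) − P(2^{s−1}) < 21·2^{s−3} − 2^{1+r} ≤ 21·2^{s−3} − 1 < 6·2^{s−1}. If r = −2, then 41·2^{s−4} < P(2^s) − P(2^{s−1}) < 21·2^{s−3} − 16. -/
/-!
Write `S m = ∑ ⌊m/(8·32^i)⌋`, so that `P(2m) - P(m) = 5m + S(2m) - S(m)`. Two crude bounds
suffice: the geometric series gives `31 S(m) ≤ 4m`, and the first two terms give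
`S(m) ≥ ⌊m/8⌋ + ⌊m/256⌋`, which is sharp enough once `256 ∣ m`. With these,
`S(2^s) - S(2^{s-1})` lies strictly between `2^{s-4}` and `2^{s-3} - 16`.
-/

open Finset

lemma tsum_div_eight_mul_pow_eq_sum_range {m n : ℕ} (h : m ≤ n) :
    ∑' i : ℕ, m / (8 * 32 ^ i) = ∑ i ∈ range n, m / (8 * 32 ^ i) := by
  refine tsum_eq_sum fun i hi => Nat.div_eq_of_lt ?_
  calc m ≤ i := h.trans (not_lt.1 (mem_range.not.1 hi))
    _ < 32 ^ i := Nat.lt_pow_self (by norm_num)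
    _ ≤ 8 * 32 ^ i := Nat.le_mul_of_pos_left _ (by norm_num)

lemma thirtyOne_mul_tsum_div_le (m : ℕ) : 31 * ∑' i : ℕ, m / (8 * 32 ^ i) ≤ 4 * m := by
  have hgeom := Nat.geom_sum_le (b := 32) (by norm_num) (m / 8) m
  simp only [Nat.div_div_eq_div_mul] at hgeom
  rw [tsum_div_eight_mul_pow_eq_sum_range le_rfl]
  omega

lemma div_add_div_le_tsum_div (m : ℕ) : m / 8 + m / 256 ≤ ∑' i : ℕ, m / (8 * 32 ^ i) := by
  rw [tsum_div_eight_mul_pow_eq_sum_range (Nat.le_add_right m 2)]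
  calc m / 8 + m / 256 = ∑ i ∈ range 2, m / (8 * 32 ^ i) := by simp [sum_range_succ]
    _ ≤ _ := sum_le_sum_of_subset (range_subset_range.2 (by omega))

lemma Pfun_two_pow_succ_sub_bounds (k : ℕ) :
    Pfun (2 ^ (k + 8)) + 41 * 2 ^ (k + 5) < Pfun (2 ^ (k + 9)) ∧
      Pfun (2 ^ (k + 9)) + 16 < Pfun (2 ^ (k + 8)) + 21 * 2 ^ (k + 6) := by
  have h9 : 2 ^ (k + 9) = 512 * 2 ^ k := by ring
  have h8 : 2 ^ (k + 8) = 256 * 2 ^ k := by ring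
  have h6 : 2 ^ (k + 6) = 64 * 2 ^ k := by ring
  have h5 : 2 ^ (k + 5) = 32 * 2 ^ k := by ring
  have hpos : 0 < 2 ^ k := by positivity
  have := thirtyOne_mul_tsum_div_le (2 ^ (k + 8))
  have := thirtyOne_mul_tsum_div_le (2 ^ (k + 9))
  have := div_add_div_le_tsum_div (2 ^ (k + 8))
  have := div_add_div_le_tsum_div (2 ^ (k + 9))
  unfold Pfun
  omega

theorem stmt_16_general (s : ℕ) (hs : 9 ≤ s) (r : ℤ) (hr2 : r ≤ 2) :
    (-1 ≤ r →
      (41 * 2 ^ (s - 4) : ℤ) < (Pfun (2 ^ s) : ℤ) - Pfun (2 ^ (s - 1)) ∧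
      (Pfun (2 ^ s) : ℤ) - Pfun (2 ^ (s - 1)) < 21 * 2 ^ (s - 3) - 2 ^ (1 + r).toNat ∧
      (21 * 2 ^ (s - 3) - 2 ^ (1 + r).toNat : ℤ) ≤ 21 * 2 ^ (s - 3) - 1 ∧
      (21 * 2 ^ (s - 3) - 1 : ℤ) < 6 * 2 ^ (s - 1)) ∧
    (r = -2 →
      (41 * 2 ^ (s - 4) : ℤ) < (Pfun (2 ^ s) : ℤ) - Pfun (2 ^ (s - 1)) ∧
      (Pfun (2 ^ s) : ℤ) - Pfun (2 ^ (s - 1)) < 21 * 2 ^ (s - 3) - 16) := by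
  obtain ⟨k, rfl⟩ : ∃ k, s = k + 9 := ⟨s - 9, by omega⟩
  obtain ⟨hlow, hupp⟩ := Pfun_two_pow_succ_sub_bounds k
  simp only [show k + 9 - 1 = k + 8 by omega, show k + 9 - 3 = k + 6 by omega,
    show k + 9 - 4 = k + 5 by omega]
  have h8 : (2 : ℤ) ^ (k + 8) = 4 * 2 ^ (k + 6) := by ring
  have hpos : (0 : ℤ) < 2 ^ (k + 6) := by positivity
  have hpow_pos : (0 : ℤ) < 2 ^ (1 + r).toNat := by positivity
  have hpow_le : (2 : ℤ) ^ (1 + r).toNat ≤ 2 ^ 3 := pow_le_pow_right₀ (by norm_num) (by omega)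
  zify at hlow hupp
  refine ⟨fun _ => ⟨?_, ?_, ?_, ?_⟩, fun _ => ⟨?_, ?_⟩⟩ <;> linarith

/-- Let `s ≥ 9` and let `r` be the unique integer in `{−2,−1,0,1,2}` with
`s ≡ r (mod 5)`. If `r ∈ {−1,0,1,2}`, then
`41·2^{s−4} < P(2^s) − P(2^{s−1}) < 21·2^{s−3} − 2^{1+r} ≤ 21·2^{s−3} − 1 < 6·2^{s−1}`.
If `r = −2`, then `41·2^{s−4} < P(2^s) − P(2^{s−1}) < 21·2^{s−3} − 16`. -/
theorem stmt_16 (s : ℕ) (hs : 9 ≤ s) (r : ℤ) (hr1 : -2 ≤ r) (hr2 : r ≤ 2)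
    (hmod : (s : ℤ) ≡ r [ZMOD 5]) :
    (-1 ≤ r →
      (41 * 2 ^ (s - 4) : ℤ) < (Pfun (2 ^ s) : ℤ) - Pfun (2 ^ (s - 1)) ∧
      (Pfun (2 ^ s) : ℤ) - Pfun (2 ^ (s - 1)) < 21 * 2 ^ (s - 3) - 2 ^ (1 + r).toNat ∧
      (21 * 2 ^ (s - 3) - 2 ^ (1 + r).toNat : ℤ) ≤ 21 * 2 ^ (s - 3) - 1 ∧
      (21 * 2 ^ (s - 3) - 1 : ℤ) < 6 * 2 ^ (s - 1)) ∧
    (r = -2 →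
      (41 * 2 ^ (s - 4) : ℤ) < (Pfun (2 ^ s) : ℤ) - Pfun (2 ^ (s - 1)) ∧
      (Pfun (2 ^ s) : ℤ) - Pfun (2 ^ (s - 1)) < 21 * 2 ^ (s - 3) - 16) :=
  stmt_16_general s hs r hr2
end
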